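/- arXiv:2305.16977 — 2 statements merged into one kernel-verified Lean document; each statement's English description precedes it below -/
import Mathlib

section
/- Let α be irrational with convergent denominators (q_n), and let φ∈C^∞(𝕋,ℝ) with mean φ̂(0)=∫_𝕋 φ. If q_{n+1} > q_n², then for every t∈ℕ there is a constant C(t) such that |D^t(S_{q_n}φ − q_nφ̂(0))|₀ ≤ (C(t)/q_n)·‖φ−φ̂(0)‖_{t+4}. -/
open Real MeasureTheory Filter Finset

attribute [local instance] Matrix.frobeniusNormedAddCommGroup Matrix.frobeniusNormedSpace

/-- The rotation matrix `R_θ` by angle `2πθ`. -/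
noncomputable def Rot (θ : ℝ) : Matrix (Fin 2) (Fin 2) ℝ :=
  !![Real.cos (2*π*θ), -Real.sin (2*π*θ); Real.sin (2*π*θ), Real.cos (2*π*θ)]

/-- `|f|₀ = sup_x ‖f x‖`. -/
noncomputable def C0norm {E : Type*} [NormedAddCommGroup E] (f : ℝ → E) : ℝ := ⨆ x, ‖f x‖

/-- `‖f‖_k = ∑_{h=0}^{k} sup_x ‖D^h f x‖`. -/
noncomputable def Cnorm {E : Type*} [NormedAddCommGroup E] [NormedSpace ℝ E]
    (k : ℕ) (f : ℝ → E) : ℝ :=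
  ∑ h ∈ Finset.range (k+1), ⨆ x, ‖iteratedDeriv h f x‖

/-- `‖x‖ = dist(x, ℤ)`. -/
noncomputable def distToInt (x : ℝ) : ℝ := |x - round x|

/-- `q` is the sequence of denominators of best rational approximations of `α`. -/
def IsBestApproxDenoms (α : ℝ) (q : ℕ → ℕ) : Prop :=
  q 0 = 1 ∧
  (∀ n : ℕ, ∀ k : ℕ, 1 ≤ k → k < q (n+1) → distToInt ((q n : ℝ) * α) ≤ distToInt ((k : ℝ) * α)) ∧
  (∀ n : ℕ, 1 / ((q (n+1) : ℝ) + (q n : ℝ)) < distToInt ((q n : ℝ) * α) ∧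
    distToInt ((q n : ℝ) * α) < 1 / (q (n+1) : ℝ))

/-- The selected subsequence `(n_h)` of Definition 1: `n₀ = 0`; if some `q_k` lies in
`[q_{n_h+1}², q_{n_h+1}⁴)` then `n_{h+1}` is the smallest such `k`, otherwise
`n_{h+1} = max {k : q_k ≤ q_{n_h+1}²}`. -/
def IsSelectedSubseq (q : ℕ → ℕ) (nseq : ℕ → ℕ) : Prop :=
  nseq 0 = 0 ∧ ∀ h : ℕ,
    ((∃ k, (q (nseq h + 1))^2 ≤ q k ∧ q k < (q (nseq h + 1))^4) →
      ((q (nseq h + 1))^2 ≤ q (nseq (h+1)) ∧ q (nseq (h+1)) < (q (nseq h + 1))^4 ∧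
        ∀ k, (q (nseq h + 1))^2 ≤ q k → q k < (q (nseq h + 1))^4 → nseq (h+1) ≤ k)) ∧
    ((¬ ∃ k, (q (nseq h + 1))^2 ≤ q k ∧ q k < (q (nseq h + 1))^4) →
      (q (nseq (h+1)) ≤ (q (nseq h + 1))^2 ∧
        ∀ k, q k ≤ (q (nseq h + 1))^2 → k ≤ nseq (h+1)))

/-- Birkhoff sums `S_m f (x) = ∑_{j<m} f (x + jα)`. -/
noncomputable def birkhoff (α : ℝ) (f : ℝ → ℝ) (m : ℕ) (x : ℝ) : ℝ :=
  ∑ j ∈ Finset.range m, f (x + j * α)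

/-- Iterated cocycle `A^{(m)}(x) = A(x+(m-1)α) ⋯ A(x+α) A(x)`. -/
noncomputable def cocycleIter (α : ℝ) (A : ℝ → Matrix (Fin 2) (Fin 2) ℝ) :
    ℕ → ℝ → Matrix (Fin 2) (Fin 2) ℝ
  | 0, _ => 1
  | (m+1), x => A (x + m * α) * cocycleIter α A m x

/-- The unit vector `(cos 2πy, sin 2πy)`. -/
noncomputable def unitVec (y : ℝ) : Fin 2 → ℝ := ![Real.cos (2*π*y), Real.sin (2*π*y)]

/-- The orbit of the second coordinate under the lift `G̃(x,y) = (x+α, y + f(x,y))`. -/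
noncomputable def liftOrbit (f : ℝ → ℝ → ℝ) (α x y : ℝ) : ℕ → ℝ
  | 0 => y
  | (i+1) => liftOrbit f α x y i + f (x + i * α) (liftOrbit f α x y i)

/-- `ρ` is a representative of the fibered rotation number of the cocycle `(α, A)`:
there is a continuous lift `G̃(x,y) = (x+α, y + f(x,y))` of the projectivized cocycle
(with `f` 1-periodic in both variables) whose Birkhoff averages converge to `ρ`. -/
def IsRotNumRep (α : ℝ) (A : ℝ → Matrix (Fin 2) (Fin 2) ℝ) (ρ : ℝ) : Prop :=
  ∃ f : ℝ → ℝ → ℝ, Continuous (Function.uncurry f) ∧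
    (∀ x y, f (x + 1) y = f x y ∧ f x (y + 1) = f x y) ∧
    (∀ x y, ∃ r : ℝ, 0 < r ∧ (A x).mulVec (unitVec y) = r • unitVec (y + f x y)) ∧
    (∀ x y : ℝ, Tendsto
      (fun n : ℕ => (∑ i ∈ Finset.range n, f (x + i * α) (liftOrbit f α x y i)) / n)
      atTop (nhds ρ))


lemma aux_periodic_bound {f : ℝ → ℝ} (hf : Continuous f) (hp : Function.Periodic f 1) :
    ∃ M, ∀ x, ‖f x‖ ≤ M := by
  obtain ⟨z, hz, hmax⟩ := (isCompact_Icc (a := (0:ℝ)) (b := 1)).exists_isMaxOn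
    ⟨0, by norm_num⟩ hf.norm.continuousOn
  refine ⟨‖f z‖, fun x => ?_⟩
  obtain ⟨y, hy, hxy⟩ := hp.exists_mem_Ico₀ one_pos x
  rw [hxy]
  exact hmax ⟨hy.1, hy.2.le⟩

lemma aux_lipschitz {g : ℝ → ℝ} {C : ℝ} (hg : Differentiable ℝ g)
    (hC : ∀ y, ‖deriv g y‖ ≤ C) (a b : ℝ) : ‖g a - g b‖ ≤ C * ‖a - b‖ :=
  Convex.norm_image_sub_le_of_norm_deriv_le (fun y _ => hg y)
    (fun y _ => hC y) convex_univ trivial trivial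

lemma aux_lemA {F : ℝ → ℝ} {L C : ℝ} (hL : 0 < L) (hF : Differentiable ℝ F)
    (hper : Function.Periodic F L) (hint : ∫ y in (0:ℝ)..L, F y = 0)
    (hC : ∀ y, ‖deriv F y‖ ≤ C) (x : ℝ) : ‖F x‖ ≤ C * L := by
  obtain ⟨x', hx', hxx'⟩ := hper.exists_mem_Ico₀ hL x
  rw [hxx']
  have hCnn : 0 ≤ C := le_trans (norm_nonneg _) (hC 0)
  have hInt : IntervalIntegrable F volume 0 L := hF.continuous.intervalIntegrable _ _
  have key : L • F x' = ∫ y in (0:ℝ)..L, (F x' - F y) := by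
    rw [intervalIntegral.integral_sub (intervalIntegrable_const) hInt, hint,
      intervalIntegral.integral_const]
    simp
  have hb : ‖∫ y in (0:ℝ)..L, (F x' - F y)‖ ≤ C * L * |L - 0| := by
    apply intervalIntegral.norm_integral_le_of_norm_le_const
    intro y hy
    rw [Set.uIoc_of_le hL.le] at hy
    have h1 : ‖F x' - F y‖ ≤ C * ‖x' - y‖ := aux_lipschitz hF hC _ _
    have h2 : ‖x' - y‖ ≤ L := by
      rw [Real.norm_eq_abs, abs_sub_le_iff]
      constructor <;> nlinarith [hx'.1, hx'.2, hy.1, hy.2]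
    nlinarith [norm_nonneg (x' - y)]
  rw [← key, smul_eq_mul, norm_mul, Real.norm_eq_abs, abs_of_pos hL] at hb
  have : |L - 0| = L := by rw [sub_zero, abs_of_pos hL]
  rw [this] at hb
  have := (mul_le_mul_iff_right₀ hL).mp (by linarith : L * ‖F x'‖ ≤ L * (C * L))
  linarith

lemma aux_perm {g : ℝ → ℝ} (hper : Function.Periodic g 1) {Q : ℕ} (hQ : 0 < Q)
    {p : ℤ} (hcop : Nat.Coprime p.natAbs Q) (x : ℝ) :
    ∑ j ∈ Finset.range Q, g (x + (j : ℝ) * ((p : ℝ) / (Q : ℝ))) =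
      ∑ j ∈ Finset.range Q, g (x + (j : ℝ) / (Q : ℝ)) := by
  haveI : NeZero Q := ⟨hQ.ne'⟩
  have hQR : (Q : ℝ) ≠ 0 := Nat.cast_ne_zero.mpr hQ.ne'
  have hgint : ∀ (y : ℝ) (m : ℤ), g (y + m) = g y := by
    intro y m
    simpa using (hper.int_mul m) y
  set G : ZMod Q → ℝ := fun z => g (x + (z.val : ℝ) / Q) with hG
  -- for any integer a, g (x + a/Q) = G (a : ZMod Q)
  have hkey : ∀ a : ℤ, g (x + (a : ℝ) / Q) = G ((a : ZMod Q)) := by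
    intro a
    set z : ZMod Q := (a : ZMod Q) with hzdef
    have hz : ((z.val : ℤ) : ZMod Q) = (a : ZMod Q) := by
      push_cast
      simp [hzdef, ZMod.natCast_rightInverse z]
    have hdvd : (Q : ℤ) ∣ a - z.val := by
      rwa [← ZMod.intCast_zmod_eq_zero_iff_dvd, Int.cast_sub, sub_eq_zero, eq_comm]
    obtain ⟨m, hm⟩ := hdvd
    have : (a : ℝ) / Q = (z.val : ℝ) / Q + m := by
      have : (a : ℝ) = (z.val : ℝ) + (Q : ℝ) * m := by
        have := congrArg (fun k : ℤ => (k : ℝ)) hm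
        push_cast at this
        linarith
      rw [this]; field_simp
    rw [this, ← add_assoc, hgint]
  -- sum over range Q of H ∘ cast = sum over ZMod Q
  have hre : ∀ H : ZMod Q → ℝ,
      ∑ j ∈ Finset.range Q, H ((j : ℕ) : ZMod Q) = ∑ z : ZMod Q, H z := by
    intro H
    apply Finset.sum_nbij' (fun j => ((j : ℕ) : ZMod Q)) (fun z => z.val)
    · intro a _; exact Finset.mem_univ _
    · intro z _; exact Finset.mem_range.mpr (ZMod.val_lt z)
    · intro a ha; exact ZMod.val_cast_of_lt (Finset.mem_range.mp ha)
    · intro z _; exact ZMod.natCast_rightInverse z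
    · intro a _; rfl
  -- unit
  have hunit : IsUnit ((p : ℤ) : ZMod Q) := by
    have h1 : IsUnit ((p.natAbs : ℕ) : ZMod Q) := (ZMod.isUnit_iff_coprime _ _).mpr hcop
    rcases Int.natAbs_eq p with h | h
    · rw [h]; rw [Int.cast_natCast]; exact h1
    · rw [h]; rw [Int.cast_neg, Int.cast_natCast]; exact h1.neg
  have hbij : Function.Bijective (fun z : ZMod Q => z * ((p : ℤ) : ZMod Q)) := by
    have := Units.mulRight_bijective hunit.unit
    rwa [IsUnit.unit_spec] at this
  calc ∑ j ∈ Finset.range Q, g (x + (j : ℝ) * ((p : ℝ) / (Q : ℝ)))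
      = ∑ j ∈ Finset.range Q, G ((((j : ℤ) * p : ℤ) : ZMod Q)) := by
        apply Finset.sum_congr rfl
        intro j _
        rw [← hkey ((j : ℤ) * p)]
        push_cast
        ring_nf
    _ = ∑ j ∈ Finset.range Q, (fun z : ZMod Q => G (z * ((p : ℤ) : ZMod Q))) ((j : ℕ) : ZMod Q) := by
        apply Finset.sum_congr rfl
        intro j _
        push_cast
        rfl
    _ = ∑ z : ZMod Q, G (z * ((p : ℤ) : ZMod Q)) := hre (fun z => G (z * ((p : ℤ) : ZMod Q)))
    _ = ∑ z : ZMod Q, G z := Fintype.sum_bijective _ hbij _ _ (fun z => rfl)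
    _ = ∑ j ∈ Finset.range Q, G ((j : ℕ) : ZMod Q) := (hre G).symm
    _ = ∑ j ∈ Finset.range Q, g (x + (j : ℝ) / Q) := by
        apply Finset.sum_congr rfl
        intro j hj
        rw [hG]
        simp only []
        rw [ZMod.val_cast_of_lt (Finset.mem_range.mp hj)]

lemma aux_iteratedDeriv_sum_shift {ψ : ℝ → ℝ} (hψ : ContDiff ℝ (⊤ : ℕ∞) ψ)
    (m : ℕ) (a : ℕ → ℝ) (t : ℕ) :
    iteratedDeriv t (fun y => ∑ j ∈ Finset.range m, ψ (y + a j)) =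
      fun x => ∑ j ∈ Finset.range m, iteratedDeriv t ψ (x + a j) := by
  induction t with
  | zero => simp
  | succ t IH =>
    have hdiff : Differentiable ℝ (iteratedDeriv t ψ) := by
      apply hψ.differentiable_iteratedDeriv
      exact_mod_cast WithTop.coe_lt_coe.mpr ((lt_top_iff_ne_top (α := ℕ∞)).mpr (by simp))
    rw [iteratedDeriv_succ, IH]
    funext x
    rw [deriv_fun_sum (fun j _ => by
      simpa [Function.comp_def] using ((hdiff (x + a j)).comp x (differentiableAt_id.add_const (a j))))]
    apply Finset.sum_congr rfl
    intro j _
    rw [deriv_comp_add_const, ← iteratedDeriv_succ]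

lemma aux_periodic_deriv {f : ℝ → ℝ} {c : ℝ} (h : Function.Periodic f c) :
    Function.Periodic (deriv f) c := by
  intro x
  have hf : (fun z => f (z + c)) = f := funext h
  calc deriv f (x + c) = deriv (fun z => f (z + c)) x := (deriv_comp_add_const f c x).symm
    _ = deriv f x := by rw [hf]

lemma aux_R_bound {g : ℝ → ℝ} (hg : Differentiable ℝ g) (hdg : Differentiable ℝ (deriv g))
    (hper : Function.Periodic g 1) (hint : ∫ y in (0:ℝ)..1, g y = 0)
    {Q : ℕ} (hQ : 0 < Q) {M : ℝ} (hM : ∀ y, ‖deriv (deriv g) y‖ ≤ M) (x : ℝ) :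
    ‖∑ j ∈ Finset.range Q, g (x + (j : ℝ) / (Q : ℝ))‖ ≤ M / Q := by
  have hQR : (0:ℝ) < Q := Nat.cast_pos.mpr hQ
  set L : ℝ := 1 / Q with hLdef
  have hL : 0 < L := by positivity
  set R : ℝ → ℝ := fun y => ∑ j ∈ Finset.range Q, g (y + (j : ℝ) / Q) with hRdef
  have hshift : ∀ j : ℕ, Differentiable ℝ (fun y : ℝ => g (y + (j:ℝ)/Q)) := by
    intro j
    exact hg.comp (differentiable_id.add_const _)
  have hRdiff : Differentiable ℝ R := Differentiable.fun_sum (fun j _ => hshift j)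
  have hderivR : deriv R = fun y => ∑ j ∈ Finset.range Q, deriv g (y + (j : ℝ) / Q) := by
    funext y
    rw [hRdef]
    rw [deriv_fun_sum (fun j _ => (hshift j) y)]
    exact Finset.sum_congr rfl (fun j _ => deriv_comp_add_const _ _ _)
  have hderivRdiff : Differentiable ℝ (deriv R) := by
    rw [hderivR]
    exact Differentiable.fun_sum (fun j _ => hdg.comp (differentiable_id.add_const _))
  have hRper : Function.Periodic R L := by
    intro y
    rw [hRdef]
    simp only []
    have h1 : ∀ j : ℕ, g (y + L + (j:ℝ)/Q) = g (y + ((j:ℝ)+1)/Q) := by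
      intro j; congr 1; rw [hLdef]; field_simp; ring
    rw [Finset.sum_congr rfl (fun j _ => h1 j)]
    have h2 : ∀ j : ℕ, g (y + ((j:ℝ)+1)/Q) = (fun j' : ℕ => g (y + (j':ℝ)/Q)) (j+1) := by
      intro j; push_cast; norm_num
    rw [Finset.sum_congr rfl (fun j _ => h2 j)]
    have e1 := Finset.sum_range_succ' (fun j : ℕ => g (y + (j:ℝ)/Q)) Q
    have e2 := Finset.sum_range_succ (fun j : ℕ => g (y + (j:ℝ)/Q)) Q
    have e3 : g (y + (Q:ℝ)/Q) = g (y + (0:ℕ)/Q) := by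
      rw [div_self hQR.ne']
      push_cast
      rw [zero_div, add_zero]
      exact hper y
    simp only [] at e1 e2 ⊢
    rw [e3] at e2
    push_cast at e1 e2 ⊢
    linarith
  have hshifti : ∀ j : ℕ, IntervalIntegrable (fun y : ℝ => g (y + (j:ℝ)/Q)) volume 0 L :=
    fun j => (hg.continuous.comp (continuous_id.add continuous_const)).intervalIntegrable _ _
  have hintR : ∫ y in (0:ℝ)..L, R y = 0 := by
    have hrw : ∫ y in (0:ℝ)..L, R y = ∫ y in (0:ℝ)..L, ∑ j ∈ Finset.range Q, g (y + (j:ℝ)/Q) := rfl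
    rw [hrw, intervalIntegral.integral_finset_sum (fun j _ => hshifti j)]
    have h1 : ∀ j ∈ Finset.range Q, (∫ y in (0:ℝ)..L, g (y + (j:ℝ)/Q))
        = ∫ y in ((j:ℝ)*L)..((j:ℝ)+1)*L, g y := by
      intro j _
      rw [intervalIntegral.integral_comp_add_right]
      congr 1
      · rw [hLdef]; field_simp; ring
      · rw [hLdef]; field_simp; ring
    rw [Finset.sum_congr rfl h1]
    have h2 := intervalIntegral.sum_integral_adjacent_intervals
      (a := fun j : ℕ => (j:ℝ)*L) (f := g) (μ := volume) (n := Q)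
      (fun k _ => hg.continuous.intervalIntegrable _ _)
    simp only [Nat.cast_zero, zero_mul] at h2
    have h3 : ∀ j ∈ Finset.range Q, (∫ y in ((j:ℝ)*L)..((j:ℝ)+1)*L, g y)
        = ∫ y in ((j:ℝ)*L)..((j+1:ℕ):ℝ)*L, g y := by
      intro j _; push_cast; ring_nf
    rw [Finset.sum_congr rfl h3, h2]
    have h4 : (Q:ℝ)*L = 1 := by rw [hLdef]; field_simp
    rw [h4, hint]
  have hderivRper : Function.Periodic (deriv R) L := aux_periodic_deriv hRper
  have hderivRint : ∫ y in (0:ℝ)..L, deriv R y = 0 := by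
    rw [intervalIntegral.integral_deriv_eq_sub (fun y _ => hRdiff y)
      (hderivRdiff.continuous.intervalIntegrable _ _)]
    have := hRper 0
    rw [zero_add] at this
    rw [this, sub_self]
  have hshiftd : ∀ j : ℕ, Differentiable ℝ (fun y : ℝ => deriv g (y + (j:ℝ)/Q)) :=
    fun j => hdg.comp (differentiable_id.add_const _)
  have hbound2 : ∀ y, ‖deriv (deriv R) y‖ ≤ (Q:ℝ) * M := by
    intro y
    rw [hderivR]
    rw [deriv_fun_sum (fun j _ => (hshiftd j) y)]
    have h5 : ∀ j ∈ Finset.range Q, deriv (fun z => deriv g (z + (j:ℝ)/Q)) y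
        = deriv (deriv g) (y + (j:ℝ)/Q) := fun j _ => deriv_comp_add_const _ _ _
    rw [Finset.sum_congr rfl h5]
    calc ‖∑ j ∈ Finset.range Q, deriv (deriv g) (y + (j:ℝ)/Q)‖
        ≤ ∑ j ∈ Finset.range Q, ‖deriv (deriv g) (y + (j:ℝ)/Q)‖ := norm_sum_le _ _
      _ ≤ ∑ _j ∈ Finset.range Q, M := Finset.sum_le_sum (fun j _ => hM _)
      _ = (Q:ℝ) * M := by rw [Finset.sum_const, Finset.card_range, nsmul_eq_mul]
  have step1 : ∀ y, ‖deriv R y‖ ≤ ((Q:ℝ) * M) * L :=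
    aux_lemA hL hderivRdiff hderivRper hderivRint hbound2
  have step2 : ∀ y, ‖R y‖ ≤ (((Q:ℝ) * M) * L) * L :=
    aux_lemA hL hRdiff hRper hintR step1
  have : (((Q:ℝ) * M) * L) * L = M / Q := by rw [hLdef]; field_simp
  rw [← this]
  exact step2 x

/-- Lemma 11: Birkhoff sums close to their mean, case `q_{n+1} > q_n²`. -/
theorem statement10 :
    ∃ C : ℕ → ℝ, (∀ t, 0 < C t) ∧
    ∀ α : ℝ, ∀ q : ℕ → ℕ, Irrational α → IsBestApproxDenoms α q →
    ∀ φ : ℝ → ℝ, ContDiff ℝ (⊤ : ℕ∞) φ → Function.Periodic φ 1 →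
    ∀ n : ℕ, (q n)^2 < q (n+1) →
    ∀ t : ℕ,
      (⨆ x : ℝ, ‖iteratedDeriv t
          (fun y => birkhoff α φ (q n) y - (q n : ℝ) * ∫ s in (0:ℝ)..1, φ s) x‖) ≤
        C t / (q n : ℝ) * Cnorm (t+4) (fun x => φ x - ∫ s in (0:ℝ)..1, φ s) := by
  refine ⟨fun _ => 1, fun t => one_pos, ?_⟩
  intro α q hirr hba φ hφ hper n hqn t
  set c : ℝ := ∫ s in (0:ℝ)..1, φ s with hc
  set ψ : ℝ → ℝ := fun x => φ x - c with hψdef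
  have hψcd : ContDiff ℝ (⊤ : ℕ∞) ψ := hφ.sub contDiff_const
  have hψper : Function.Periodic ψ 1 := fun x => by simp [hψdef, hper x]
  have hψint : ∫ s in (0:ℝ)..1, ψ s = 0 := by
    have : ∫ s in (0:ℝ)..1, ψ s = ∫ s in (0:ℝ)..1, (φ s - c) := rfl
    rw [this, intervalIntegral.integral_sub (hφ.continuous.intervalIntegrable _ _)
      intervalIntegrable_const, intervalIntegral.integral_const]
    simp [hc]
  have hdiff : ∀ m : ℕ, Differentiable ℝ (iteratedDeriv m ψ) := fun m =>
    hψcd.differentiable_iteratedDeriv m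
      (by exact_mod_cast WithTop.coe_lt_coe.mpr ((lt_top_iff_ne_top (α := ℕ∞)).mpr (by simp)))
  have hcont : ∀ m : ℕ, Continuous (iteratedDeriv m ψ) := fun m => (hdiff m).continuous
  have hperm : ∀ m : ℕ, Function.Periodic (iteratedDeriv m ψ) 1 := by
    intro m x
    have hps : (fun z => ψ (z + 1)) = ψ := funext hψper
    have h1 := congrFun (iteratedDeriv_comp_add_const m ψ 1) x
    rw [hps] at h1
    exact h1.symm
  set Q : ℕ := q n with hQdef
  have hQ : 0 < Q := by
    rcases Nat.eq_zero_or_pos Q with h0 | h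
    · exfalso
      have hlow := (hba.2.2 n).1
      rw [← hQdef, h0] at hlow
      simp only [Nat.cast_zero, zero_mul, add_zero] at hlow
      have : distToInt 0 = 0 := by simp [distToInt]
      rw [this] at hlow
      have : (0:ℝ) ≤ 1 / (q (n+1) : ℝ) := by positivity
      linarith
    · exact h
  have hQR : (0:ℝ) < Q := Nat.cast_pos.mpr hQ
  have hq2 : ((Q : ℝ))^2 < (q (n+1) : ℝ) := by exact_mod_cast hqn
  set p : ℤ := round ((Q:ℝ) * α) with hpdef
  have hub : |(Q:ℝ) * α - p| < 1 / (q (n+1) : ℝ) := by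
    have := (hba.2.2 n).2
    rw [← hQdef] at this
    exact this
  have hlb : 0 < |(Q:ℝ) * α - p| := by
    have hlow := (hba.2.2 n).1
    rw [← hQdef] at hlow
    have h1 : (0:ℝ) < 1 / ((q (n+1) : ℝ) + (Q : ℝ)) := by
      apply one_div_pos.mpr
      have : (0:ℝ) ≤ (q (n+1) : ℝ) := Nat.cast_nonneg _
      linarith
    calc (0:ℝ) < 1 / ((q (n+1) : ℝ) + (Q : ℝ)) := h1
      _ < distToInt ((Q:ℝ) * α) := hlow
      _ = |(Q:ℝ) * α - p| := rfl
  have hub2 : |(Q:ℝ) * α - p| < 1 / (Q:ℝ)^2 := by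
    refine hub.trans ?_
    apply one_div_lt_one_div_of_lt
    · positivity
    · exact hq2
  -- coprimality
  have hcop : Nat.Coprime p.natAbs Q := by
    by_contra hne
    set d := Nat.gcd p.natAbs Q with hd
    have hdQ : d ∣ Q := Nat.gcd_dvd_right _ _
    have hdp : (d:ℤ) ∣ p := Int.dvd_natAbs.mp
      (Int.natCast_dvd_natCast.mpr (Nat.gcd_dvd_left _ _))
    have hdne : d ≠ 0 := by
      intro h0
      rw [h0] at hdQ
      exact hQ.ne' (Nat.eq_zero_of_zero_dvd hdQ)
    have hd1 : 1 < d := by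
      rcases Nat.lt_or_ge d 2 with h | h
      · exfalso
        have : d = 1 := by omega
        exact hne this
      · omega
    obtain ⟨k, hk⟩ := hdQ
    obtain ⟨m, hm⟩ := hdp
    have hk1 : 1 ≤ k := by
      rcases Nat.eq_zero_or_pos k with h0 | h
      · exfalso; rw [h0, Nat.mul_zero] at hk; exact hQ.ne' hk
      · exact h
    have hklt : k < q (n+1) := by
      have h1 : k ≤ Q := by rw [hk]; exact Nat.le_mul_of_pos_left k (by omega)
      have h2 : Q < q (n+1) := by
        have h3 : Q ≤ Q^2 := Nat.le_self_pow (by norm_num) Q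
        exact lt_of_le_of_lt h3 hqn
      omega
    have hbest := hba.2.1 n k hk1 hklt
    rw [← hQdef] at hbest
    have hdR : (0:ℝ) < d := by exact_mod_cast Nat.pos_of_ne_zero hdne
    have heq : (Q:ℝ) * α - p = (d:ℝ) * ((k:ℝ) * α - (m:ℝ)) := by
      have h1 : (Q:ℝ) = (d:ℝ) * (k:ℝ) := by exact_mod_cast congrArg (Nat.cast : ℕ → ℝ) hk
      have h2 : (p:ℝ) = (d:ℝ) * (m:ℝ) := by exact_mod_cast congrArg (Int.cast : ℤ → ℝ) hm
      rw [h1, h2]; ring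
    have hkle : distToInt ((k:ℝ) * α) ≤ |(Q:ℝ) * α - p| / d := by
      have h1 : distToInt ((k:ℝ) * α) ≤ |(k:ℝ) * α - (m:ℝ)| := round_le _ m
      have h2 : |(k:ℝ) * α - (m:ℝ)| = |(Q:ℝ) * α - p| / d := by
        rw [heq, abs_mul, abs_of_pos hdR]
        field_simp
      rw [← h2]; exact h1
    have hfrac : |(Q:ℝ) * α - p| / d < |(Q:ℝ) * α - p| :=
      div_lt_self hlb (by exact_mod_cast hd1)
    have hQd : distToInt ((Q:ℝ) * α) = |(Q:ℝ) * α - p| := rfl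
    rw [hQd] at hbest
    linarith
  -- norms
  set M₁ : ℝ := ⨆ x : ℝ, ‖iteratedDeriv (t+1) ψ x‖ with hM₁def
  set M₂ : ℝ := ⨆ x : ℝ, ‖iteratedDeriv (t+2) ψ x‖ with hM₂def
  have hbdd : ∀ m : ℕ, BddAbove (Set.range fun x => ‖iteratedDeriv m ψ x‖) := by
    intro m
    obtain ⟨B, hB⟩ := aux_periodic_bound (hcont m) (hperm m)
    exact ⟨B, by rintro _ ⟨x, rfl⟩; exact hB x⟩
  have hM₁ : ∀ x, ‖iteratedDeriv (t+1) ψ x‖ ≤ M₁ := fun x => le_ciSup (hbdd (t+1)) x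
  have hM₂ : ∀ x, ‖iteratedDeriv (t+2) ψ x‖ ≤ M₂ := fun x => le_ciSup (hbdd (t+2)) x
  have hM₁0 : 0 ≤ M₁ := le_trans (norm_nonneg _) (hM₁ 0)
  have hM₂0 : 0 ≤ M₂ := le_trans (norm_nonneg _) (hM₂ 0)
  set g : ℝ → ℝ := iteratedDeriv t ψ with hgdef
  have hdg : ∀ y, ‖deriv g y‖ ≤ M₁ := by
    intro y
    rw [hgdef, ← iteratedDeriv_succ]
    exact hM₁ y
  -- pointwise estimate
  have hpoint : ∀ x : ℝ, ‖∑ j ∈ Finset.range Q, g (x + (j:ℝ) * α)‖ ≤ (M₁ + M₂) / Q := by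
    intro x
    have hδ : |α - (p:ℝ)/Q| < 1/(Q:ℝ)^3 := by
      have h1 : α - (p:ℝ)/Q = ((Q:ℝ) * α - p)/Q := by field_simp
      rw [h1, abs_div, abs_of_pos hQR]
      rw [div_lt_iff₀ hQR]
      calc |(Q:ℝ) * α - p| < 1/(Q:ℝ)^2 := hub2
        _ = 1/(Q:ℝ)^3 * Q := by field_simp
    have hsum1 : ‖(∑ j ∈ Finset.range Q, g (x + (j:ℝ) * α)) -
        (∑ j ∈ Finset.range Q, g (x + (j:ℝ) * ((p:ℝ)/Q)))‖ ≤ M₁ / Q := by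
      rw [← Finset.sum_sub_distrib]
      calc ‖∑ j ∈ Finset.range Q, (g (x + (j:ℝ) * α) - g (x + (j:ℝ) * ((p:ℝ)/Q)))‖
          ≤ ∑ j ∈ Finset.range Q, ‖g (x + (j:ℝ) * α) - g (x + (j:ℝ) * ((p:ℝ)/Q))‖ :=
            norm_sum_le _ _
        _ ≤ ∑ j ∈ Finset.range Q, M₁ * ((Q:ℝ) * (1/(Q:ℝ)^3)) := by
            apply Finset.sum_le_sum
            intro j hj
            have h1 := aux_lipschitz (hdiff t) hdg (x + (j:ℝ) * α) (x + (j:ℝ) * ((p:ℝ)/Q))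
            refine h1.trans ?_
            apply mul_le_mul_of_nonneg_left ?_ hM₁0
            have h2 : (x + (j:ℝ) * α) - (x + (j:ℝ) * ((p:ℝ)/Q)) = (j:ℝ) * (α - (p:ℝ)/Q) := by
              ring
            rw [Real.norm_eq_abs, h2, abs_mul, Nat.abs_cast]
            have hjQ : (j:ℝ) ≤ Q := by
              exact_mod_cast (Finset.mem_range.mp hj).le
            have := hδ.le
            apply mul_le_mul hjQ this (abs_nonneg _) (Nat.cast_nonneg _) |>.trans
            exact le_refl _
        _ = M₁ / Q := by
            rw [Finset.sum_const, Finset.card_range, nsmul_eq_mul]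
            field_simp
    have hpermeq : ∑ j ∈ Finset.range Q, g (x + (j:ℝ) * ((p:ℝ)/Q)) =
        ∑ j ∈ Finset.range Q, g (x + (j:ℝ)/Q) := aux_perm (hperm t) hQ hcop x
    have hgint : ∫ y in (0:ℝ)..1, g y = 0 := by
      rw [hgdef]
      cases t with
      | zero => simpa [iteratedDeriv_zero] using hψint
      | succ s =>
        rw [iteratedDeriv_succ, intervalIntegral.integral_deriv_eq_sub
          (fun y _ => hdiff s y)
          (by rw [← iteratedDeriv_succ]; exact (hcont (s+1)).intervalIntegrable _ _)]
        have := hperm s 0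
        rw [zero_add] at this
        rw [this, sub_self]
    have hdg2 : Differentiable ℝ (deriv g) := by
      rw [hgdef, ← iteratedDeriv_succ]
      exact hdiff (t+1)
    have hM2' : ∀ y, ‖deriv (deriv g) y‖ ≤ M₂ := by
      intro y
      rw [hgdef, ← iteratedDeriv_succ, ← iteratedDeriv_succ]
      exact hM₂ y
    have hRb : ‖∑ j ∈ Finset.range Q, g (x + (j:ℝ)/Q)‖ ≤ M₂ / Q :=
      aux_R_bound (hdiff t) hdg2 (hperm t) hgint hQ hM2' x
    have htri : ∀ A B : ℝ, ‖A‖ ≤ ‖A - B‖ + ‖B‖ := by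
      intro A B
      calc ‖A‖ = ‖(A - B) + B‖ := by rw [sub_add_cancel]
        _ ≤ ‖A - B‖ + ‖B‖ := norm_add_le _ _
    calc ‖∑ j ∈ Finset.range Q, g (x + (j:ℝ) * α)‖
        ≤ ‖(∑ j ∈ Finset.range Q, g (x + (j:ℝ) * α)) -
            (∑ j ∈ Finset.range Q, g (x + (j:ℝ) * ((p:ℝ)/Q)))‖ +
          ‖∑ j ∈ Finset.range Q, g (x + (j:ℝ) * ((p:ℝ)/Q))‖ := htri _ _
      _ ≤ M₁ / Q + M₂ / Q := add_le_add hsum1 (by rw [hpermeq]; exact hRb)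
      _ = (M₁ + M₂) / Q := by ring
  -- rewrite the target function
  have hfun : (fun y => birkhoff α φ Q y - (Q:ℝ) * c) =
      fun y => ∑ j ∈ Finset.range Q, ψ (y + (j:ℝ) * α) := by
    funext y
    show (∑ j ∈ Finset.range Q, φ (y + (j:ℝ) * α)) - (Q:ℝ) * c
      = ∑ j ∈ Finset.range Q, (φ (y + (j:ℝ) * α) - c)
    rw [Finset.sum_sub_distrib, Finset.sum_const, Finset.card_range, nsmul_eq_mul]
  have hCn : M₁ + M₂ ≤ Cnorm (t+4) ψ := by
    have hpair : ∑ h ∈ ({t+1, t+2} : Finset ℕ), (⨆ x : ℝ, ‖iteratedDeriv h ψ x‖) = M₁ + M₂ :=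
      Finset.sum_pair (by omega)
    show M₁ + M₂ ≤ ∑ h ∈ Finset.range (t+4+1), ⨆ x : ℝ, ‖iteratedDeriv h ψ x‖
    rw [← hpair]
    apply Finset.sum_le_sum_of_subset_of_nonneg
    · intro h hh
      simp only [Finset.mem_insert, Finset.mem_singleton] at hh
      rcases hh with rfl | rfl <;> (apply Finset.mem_range.mpr; omega)
    · intro i _ _
      exact Real.iSup_nonneg (fun x => norm_nonneg _)
  show (⨆ x : ℝ, ‖iteratedDeriv t (fun y => birkhoff α φ Q y - (Q:ℝ) * c) x‖)
      ≤ 1 / (Q:ℝ) * Cnorm (t+4) ψ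
  calc (⨆ x : ℝ, ‖iteratedDeriv t (fun y => birkhoff α φ Q y - (Q:ℝ) * c) x‖)
      = ⨆ x : ℝ, ‖∑ j ∈ Finset.range Q, g (x + (j:ℝ) * α)‖ := by
        rw [hfun, aux_iteratedDeriv_sum_shift hψcd Q (fun j => (j:ℝ) * α) t]
    _ ≤ (M₁ + M₂) / Q := Real.iSup_le hpoint (div_nonneg (by linarith) hQR.le)
    _ ≤ 1 / (Q:ℝ) * Cnorm (t+4) ψ := by
        have h1 : (M₁ + M₂) / Q = 1 / (Q:ℝ) * (M₁ + M₂) := by ring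
        rw [h1]
        apply mul_le_mul_of_nonneg_left hCn (by positivity)
end

section
/- Let α∈ℝ, ψ∈C⁰(𝕋,ℝ), and let ξ:𝕋→M₂(ℝ) be continuous and such that A:=R_ψ+ξ takes values in SL(2,ℝ) and is homotopic to the identity. Then for every constant c∈ℝ and every representative ρ∈ℝ of the fibered rotation number ρ(α,A), one has ‖ρ−c‖ ≤ |R_ψ−R_c|₀ + |ξ|₀, where ‖x‖=dist(x,ℤ). -/
open Real MeasureTheory Filter Finset

attribute [local instance] Matrix.frobeniusNormedAddCommGroup Matrix.frobeniusNormedSpace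

----------------------------------------------------------------
-- Auxiliary lemmas
----------------------------------------------------------------

lemma distToInt_le_half (x : ℝ) : distToInt x ≤ 1/2 := abs_sub_round x

lemma distToInt_le_abs_sub_int (t : ℝ) (m : ℤ) : distToInt t ≤ |t - m| := by
  unfold distToInt
  rcases eq_or_ne (round t) m with h | h
  · rw [h]
  · have h1 : |t - round t| ≤ 1/2 := abs_sub_round t
    have h2 : (1:ℝ) ≤ |(round t - m : ℤ)| := by
      exact_mod_cast Int.one_le_abs (sub_ne_zero.2 h)
    have h3 : |(round t:ℝ) - m| ≤ |(round t:ℝ) - t| + |t - m| := abs_sub_le _ _ _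
    rw [abs_sub_comm ((round t:ℝ)) t] at h3
    push_cast at h2
    linarith

lemma int_not_near_half (m j : ℤ) (h : |(m:ℝ) + 1/2 - j| < 1/4) : False := by
  rcases le_or_gt j m with hj | hj
  · have : ((j:ℝ)) ≤ m := by exact_mod_cast hj
    rw [abs_lt] at h; linarith
  · have : ((m:ℝ)) + 1 ≤ j := by exact_mod_cast hj
    rw [abs_lt] at h; linarith

lemma round_const_of_cont (g : ℝ → ℝ) (hg : Continuous g)
    (hb : ∀ t, |g t - round (g t)| < 1/4) : round (g 1) = round (g 0) := by
  rcases lt_trichotomy (round (g 0)) (round (g 1)) with h | h | h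
  · exfalso
    have hm0 := hb 0; have hm1 := hb 1
    have hmem : (round (g 0) : ℝ) + 1/2 ∈ Set.Icc (g 0) (g 1) := by
      constructor
      · rw [abs_lt] at hm0; linarith
      · rw [abs_lt] at hm1
        have : (round (g 0) : ℝ) + 1 ≤ round (g 1) := by exact_mod_cast h
        linarith
    obtain ⟨t, _, ht⟩ := intermediate_value_Icc (by norm_num : (0:ℝ) ≤ 1) hg.continuousOn hmem
    exact int_not_near_half _ _ (ht ▸ hb t)
  · exact h.symm
  · exfalso
    have hm0 := hb 0; have hm1 := hb 1
    have hmem : (round (g 1) : ℝ) + 1/2 ∈ Set.Icc (g 1) (g 0) := by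
      constructor
      · rw [abs_lt] at hm1; linarith
      · rw [abs_lt] at hm0
        have : (round (g 1) : ℝ) + 1 ≤ round (g 0) := by exact_mod_cast h
        linarith
    obtain ⟨t, _, ht⟩ := intermediate_value_Icc' (by norm_num : (0:ℝ) ≤ 1) hg.continuousOn hmem
    exact int_not_near_half _ _ (ht ▸ hb t)

set_option maxHeartbeats 1000000 in
lemma pointwise_est (r θ N : ℝ) (hr : 0 < r) (hN2 : N < 1/2)
    (hc : 1 - N ≤ r * Real.cos (2*π*θ)) (hs : |r * Real.sin (2*π*θ)| ≤ N) :
    distToInt θ ≤ N/2 := by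
  have hπ : 0 < π := Real.pi_pos
  set t : ℝ := θ - round θ with htdef
  have habs : distToInt θ = |t| := rfl
  have hθt : (2*π*θ) = 2*π*t + (round θ) * (2*π) := by rw [htdef]; ring
  have hcos1 : Real.cos (2*π*θ) = Real.cos (2*π*t) := by
    rw [hθt, Real.cos_add_int_mul_two_pi]
  have hsin1 : Real.sin (2*π*θ) = Real.sin (2*π*t) := by
    rw [hθt, Real.sin_add_int_mul_two_pi]
  set d : ℝ := |t| with hddef
  have hd2 : d ≤ 1/2 := abs_sub_round θ
  have habs2 : |2*π*t| = 2*π*d := by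
    rw [hddef, abs_mul, abs_of_pos (by linarith : (0:ℝ) < 2*π)]
  have hcos2 : Real.cos (2*π*θ) = Real.cos (2*π*d) := by
    rw [hcos1, ← habs2, Real.cos_abs]
  have hsin2 : |Real.sin (2*π*θ)| = Real.sin (2*π*d) := by
    rw [hsin1]
    rcases le_or_gt 0 t with ht | ht
    · rw [hddef, abs_of_nonneg ht]
      exact abs_of_nonneg (Real.sin_nonneg_of_nonneg_of_le_pi (by positivity)
        (by nlinarith [abs_of_nonneg ht]))
    · rw [hddef, abs_of_neg ht]
      have h1 : Real.sin (2*π*-t) = -Real.sin (2*π*t) := by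
        rw [show 2*π*-t = -(2*π*t) by ring, Real.sin_neg]
      rw [h1]
      have h2 : Real.sin (2*π*-t) ≥ 0 := Real.sin_nonneg_of_nonneg_of_le_pi
        (by nlinarith) (by nlinarith [abs_of_neg ht])
      rw [h1] at h2
      exact abs_of_nonpos (by linarith)
  have hd0 : 0 ≤ d := abs_nonneg t
  have hrc : 1 - N ≤ r * Real.cos (2*π*d) := by rw [← hcos2]; exact hc
  have hrs : r * Real.sin (2*π*d) ≤ N := by
    rw [← hsin2]
    calc r * |Real.sin (2*π*θ)| = |r * Real.sin (2*π*θ)| := by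
          rw [abs_mul, abs_of_pos hr]
      _ ≤ N := hs
  have hcpos : 0 < Real.cos (2*π*d) := by
    by_contra h
    push_neg at h
    nlinarith
  have hd4 : d < 1/4 := by
    by_contra h
    push_neg at h
    have : Real.cos (2*π*d) ≤ 0 := Real.cos_nonpos_of_pi_div_two_le_of_le
      (by nlinarith) (by nlinarith)
    linarith
  have hrge : 1 - N ≤ r := by
    have := Real.cos_le_one (2*π*d)
    nlinarith
  have hsnn : 0 ≤ Real.sin (2*π*d) :=
    Real.sin_nonneg_of_nonneg_of_le_pi (by positivity) (by nlinarith)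
  have hsle : Real.sin (2*π*d) ≤ 2*N := by nlinarith
  have hj : 2/π * (2*π*d) ≤ Real.sin (2*π*d) :=
    Real.mul_le_sin (by positivity) (by nlinarith)
  rw [show 2/π * (2*π*d) = 4*d*(π/π) by ring, div_self hπ.ne', mul_one] at hj
  rw [habs]
  linarith

lemma cs2 (a b u v : ℝ) (h : u^2 + v^2 = 1) : (a*u + b*v)^2 ≤ a^2 + b^2 := by
  nlinarith [sq_nonneg (a*v - b*u)]

lemma cs2' (a b u v : ℝ) (h : u^2 + v^2 = 1) : (a*u - b*v)^2 ≤ a^2 + b^2 := by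
  nlinarith [sq_nonneg (a*v + b*u)]

set_option maxHeartbeats 1000000 in
lemma key_bounds (ψx c y fv r : ℝ) (ξx : Matrix (Fin 2) (Fin 2) ℝ)
    (heq : (Rot ψx + ξx).mulVec (unitVec y) = r • unitVec (y + fv)) :
    1 - ‖Rot ψx - Rot c + ξx‖ ≤ r * Real.cos (2*π*(fv - c)) ∧
    |r * Real.sin (2*π*(fv - c))| ≤ ‖Rot ψx - Rot c + ξx‖ := by
  have he' := congrFun heq 0
  have he1' := congrFun heq 1
  simp only [Rot, unitVec, Matrix.mulVec, dotProduct, Fin.sum_univ_two,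
    Matrix.add_apply, Matrix.cons_val', Matrix.cons_val_zero, Matrix.cons_val_one,
    Matrix.head_cons, Matrix.head_fin_const, Matrix.empty_val', Matrix.cons_val_fin_one,
    Pi.smul_apply, smul_eq_mul, Matrix.of_apply] at he' he1'
  set C := Real.cos (2*π*y) with hC
  set S := Real.sin (2*π*y) with hS
  set Cc := Real.cos (2*π*c) with hCc
  set Sc := Real.sin (2*π*c) with hSc
  set Cψ := Real.cos (2*π*ψx) with hCψ
  set Sψ := Real.sin (2*π*ψx) with hSψ
  set CF := Real.cos (2*π*(y+fv)) with hCF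
  set SF := Real.sin (2*π*(y+fv)) with hSF
  have he0 : (Cψ + ξx 0 0) * C + (-Sψ + ξx 0 1) * S = r * CF := by linarith [he']
  have he1 : (Sψ + ξx 1 0) * C + (Cψ + ξx 1 1) * S = r * SF := by linarith [he1']
  set e00 := Cψ - Cc + ξx 0 0 with he00
  set e01 := -Sψ + Sc + ξx 0 1 with he01
  set e10 := Sψ - Sc + ξx 1 0 with he10
  set e11 := Cψ - Cc + ξx 1 1 with he11
  have hE00 : (Rot ψx - Rot c + ξx) 0 0 = e00 := by
    simp [Rot, Matrix.sub_apply, Matrix.add_apply, he00, hCψ, hCc]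
  have hE01 : (Rot ψx - Rot c + ξx) 0 1 = e01 := by
    simp [Rot, Matrix.sub_apply, Matrix.add_apply, he01, hSψ, hSc]
  have hE10 : (Rot ψx - Rot c + ξx) 1 0 = e10 := by
    simp [Rot, Matrix.sub_apply, Matrix.add_apply, he10, hSψ, hSc]
  have hE11 : (Rot ψx - Rot c + ξx) 1 1 = e11 := by
    simp [Rot, Matrix.sub_apply, Matrix.add_apply, he11, hCψ, hCc]
  have hN : ‖Rot ψx - Rot c + ξx‖ = Real.sqrt (e00^2 + e01^2 + e10^2 + e11^2) := by
    rw [Matrix.frobenius_norm_def, Real.sqrt_eq_rpow]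
    rw [Fin.sum_univ_two]
    rw [Fin.sum_univ_two, Fin.sum_univ_two]
    rw [hE00, hE01, hE10, hE11]
    norm_num [Real.norm_eq_abs]
    rw [show (2:ℝ) = ((2:ℕ):ℝ) by norm_num]
    congr 1
    ring
  set c1 := Real.cos (2*π*(y+c)) with hc1def
  set s1 := Real.sin (2*π*(y+c)) with hs1def
  have hc1 : c1 = C*Cc - S*Sc := by
    rw [hc1def, show 2*π*(y+c) = 2*π*y + 2*π*c by ring, Real.cos_add]
  have hs1 : s1 = S*Cc + C*Sc := by
    rw [hs1def, show 2*π*(y+c) = 2*π*y + 2*π*c by ring, Real.sin_add]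
  have hP1 : S^2 + C^2 = 1 := Real.sin_sq_add_cos_sq _
  have hP2 : Sc^2 + Cc^2 = 1 := Real.sin_sq_add_cos_sq _
  have hPc : s1^2 + c1^2 = 1 := Real.sin_sq_add_cos_sq _
  set P0 := e00*C + e01*S with hP0
  set P1 := e10*C + e11*S with hP1'
  have hid1 : r * Real.cos (2*π*(fv-c)) = 1 + (P0*c1 + P1*s1) := by
    rw [show 2*π*(fv-c) = 2*π*(y+fv) - 2*π*(y+c) by ring, Real.cos_sub]
    rw [← hCF, ← hSF, ← hc1def, ← hs1def, hP0, hP1', hc1, hs1, he00, he01, he10, he11]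
    linear_combination (-(C*Cc - S*Sc)) * he0 + (-(S*Cc + C*Sc)) * he1 + (Cc^2 + Sc^2) * hP1 + hP2
  have hid2 : r * Real.sin (2*π*(fv-c)) = P1*c1 - P0*s1 := by
    rw [show 2*π*(fv-c) = 2*π*(y+fv) - 2*π*(y+c) by ring, Real.sin_sub]
    rw [← hCF, ← hSF, ← hc1def, ← hs1def, hP0, hP1', hc1, hs1, he00, he01, he10, he11]
    linear_combination (-(C*Cc - S*Sc)) * he1 + (S*Cc + C*Sc) * he0
  have hCS : C^2 + S^2 = 1 := by linarith
  have hc1s1 : c1^2 + s1^2 = 1 := by linarith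
  have hsq0 : P0^2 ≤ e00^2 + e01^2 := cs2 e00 e01 C S hCS
  have hsq1 : P1^2 ≤ e10^2 + e11^2 := cs2 e10 e11 C S hCS
  have hb1 : (P0*c1 + P1*s1)^2 ≤ e00^2 + e01^2 + e10^2 + e11^2 := by
    have := cs2 P0 P1 c1 s1 hc1s1
    linarith
  have hb2 : (P1*c1 - P0*s1)^2 ≤ e00^2 + e01^2 + e10^2 + e11^2 := by
    have := cs2' P1 P0 c1 s1 hc1s1
    linarith
  have habs1 : |P0*c1 + P1*s1| ≤ Real.sqrt (e00^2 + e01^2 + e10^2 + e11^2) := by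
    rw [← Real.sqrt_sq_eq_abs]; exact Real.sqrt_le_sqrt hb1
  have habs2 : |P1*c1 - P0*s1| ≤ Real.sqrt (e00^2 + e01^2 + e10^2 + e11^2) := by
    rw [← Real.sqrt_sq_eq_abs]; exact Real.sqrt_le_sqrt hb2
  rw [hN]
  constructor
  · rw [hid1]
    have := abs_le.mp habs1
    linarith [this.1]
  · rw [hid2]
    exact habs2

lemma Rot_sub_norm_le (a c : ℝ) : ‖Rot a - Rot c‖ ≤ 4 := by
  have hN : ‖Rot a - Rot c‖ = Real.sqrt (((Rot a - Rot c) 0 0)^2 + ((Rot a - Rot c) 0 1)^2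
      + ((Rot a - Rot c) 1 0)^2 + ((Rot a - Rot c) 1 1)^2) := by
    rw [Matrix.frobenius_norm_def, Real.sqrt_eq_rpow]
    rw [Fin.sum_univ_two, Fin.sum_univ_two, Fin.sum_univ_two]
    norm_num [Real.norm_eq_abs]
    rw [show (2:ℝ) = ((2:ℕ):ℝ) by norm_num]
    congr 1
    ring
  have h00 : (Rot a - Rot c) 0 0 = Real.cos (2*π*a) - Real.cos (2*π*c) := by
    simp [Rot, Matrix.sub_apply]
  have h01 : (Rot a - Rot c) 0 1 = -Real.sin (2*π*a) + Real.sin (2*π*c) := by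
    simp [Rot, Matrix.sub_apply]
  have h10 : (Rot a - Rot c) 1 0 = Real.sin (2*π*a) - Real.sin (2*π*c) := by
    simp [Rot, Matrix.sub_apply]
  have h11 : (Rot a - Rot c) 1 1 = Real.cos (2*π*a) - Real.cos (2*π*c) := by
    simp [Rot, Matrix.sub_apply]
  rw [hN, h00, h01, h10, h11]
  have hb : ((Real.cos (2*π*a) - Real.cos (2*π*c))^2 + (-Real.sin (2*π*a) + Real.sin (2*π*c))^2
      + (Real.sin (2*π*a) - Real.sin (2*π*c))^2 + (Real.cos (2*π*a) - Real.cos (2*π*c))^2) ≤ 16 := by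
    nlinarith [Real.cos_le_one (2*π*a), Real.neg_one_le_cos (2*π*a),
      Real.cos_le_one (2*π*c), Real.neg_one_le_cos (2*π*c),
      Real.sin_le_one (2*π*a), Real.neg_one_le_sin (2*π*a),
      Real.sin_le_one (2*π*c), Real.neg_one_le_sin (2*π*c)]
  calc Real.sqrt _ ≤ Real.sqrt 16 := Real.sqrt_le_sqrt hb
    _ = 4 := by rw [show (16:ℝ) = 4^2 by norm_num, Real.sqrt_sq (by norm_num)]

/-- Comparison of the fibered rotation number of a near-rotation cocycle with a constant:
`‖ρ − c‖ ≤ |R_ψ − R_c|₀ + |ξ|₀`. -/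
theorem statement14 (α : ℝ) (ψ : ℝ → ℝ) (ξ : ℝ → Matrix (Fin 2) (Fin 2) ℝ)
    (hψ : Continuous ψ) (hψp : Function.Periodic ψ 1)
    (hξ : Continuous ξ) (hξp : Function.Periodic ξ 1)
    (hdet : ∀ x, (Rot (ψ x) + ξ x).det = 1)
    (c : ℝ) (ρ : ℝ) (hρ : IsRotNumRep α (fun x => Rot (ψ x) + ξ x) ρ) :
    distToInt (ρ - c) ≤ C0norm (fun x => Rot (ψ x) - Rot c) + C0norm ξ := by
  set M := C0norm (fun x => Rot (ψ x) - Rot c) + C0norm ξ with hMdef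
  have hM0 : 0 ≤ M := add_nonneg (Real.iSup_nonneg fun x => norm_nonneg _)
    (Real.iSup_nonneg fun x => norm_nonneg _)
  rcases le_or_gt (1/2 : ℝ) M with hMhalf | hMhalf
  · exact (distToInt_le_half _).trans hMhalf
  · obtain ⟨f, hfc, hfper, hfr, hlim⟩ := hρ
    have hbddRot : BddAbove (Set.range fun x => ‖Rot (ψ x) - Rot c‖) := by
      refine ⟨4, ?_⟩
      rintro _ ⟨x, rfl⟩
      exact Rot_sub_norm_le (ψ x) c
    have hbddξ : BddAbove (Set.range fun x => ‖ξ x‖) := by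
      have hB : Bornology.IsBounded (Set.range ξ) :=
        hξp.isBounded_of_continuous one_ne_zero hξ
      obtain ⟨B, hB⟩ := isBounded_iff_forall_norm_le.mp hB
      refine ⟨B, ?_⟩
      rintro _ ⟨x, rfl⟩
      exact hB _ (Set.mem_range_self x)
    have hEle : ∀ x, ‖Rot (ψ x) - Rot c + ξ x‖ ≤ M := by
      intro x
      calc ‖Rot (ψ x) - Rot c + ξ x‖ ≤ ‖Rot (ψ x) - Rot c‖ + ‖ξ x‖ := norm_add_le _ _
        _ ≤ M := by
          rw [hMdef]
          exact add_le_add (le_ciSup hbddRot x) (le_ciSup hbddξ x)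
    have hpt : ∀ x y : ℝ, distToInt (f x y - c) ≤ M/2 := by
      intro x y
      obtain ⟨r, hr, heqr⟩ := hfr x y
      obtain ⟨h1, h2⟩ := key_bounds (ψ x) c y (f x y) r (ξ x) heqr
      exact pointwise_est r _ M hr hMhalf (le_trans (by linarith [hEle x]) h1)
        (h2.trans (hEle x))
    have hroundconst : ∀ x y : ℝ, round (f x y - c) = round (f 0 0 - c) := by
      intro x y
      have hg : Continuous fun t : ℝ => f (t*x) (t*y) - c := by
        have h1 : Continuous fun t : ℝ => ((t*x, t*y) : ℝ × ℝ) :=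
          ((continuous_id.mul continuous_const).prodMk
            (continuous_id.mul continuous_const))
        exact (hfc.comp h1).sub continuous_const
      have hb : ∀ t : ℝ, |(f (t*x) (t*y) - c) - round (f (t*x) (t*y) - c)| < 1/4 := by
        intro t
        exact lt_of_le_of_lt (hpt (t*x) (t*y)) (by linarith)
      have := round_const_of_cont _ hg hb
      simpa using this
    set k := round (f 0 0 - c) with hk
    have hbd : ∀ x y : ℝ, |f x y - (c + k)| ≤ M/2 := by
      intro x y
      have h1 := hpt x y
      unfold distToInt at h1
      rw [hroundconst x y] at h1
      have heq : f x y - (c + (k:ℝ)) = f x y - c - k := by ring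
      rw [heq]
      exact h1
    have hlim00 := hlim 0 0
    have hn : ∀ n : ℕ, 1 ≤ n →
        |(∑ i ∈ Finset.range n, f ((0:ℝ) + i * α) (liftOrbit f α 0 0 i)) / n - (c + k)| ≤ M/2 := by
      intro n hn1
      have hnpos : (0:ℝ) < n := by exact_mod_cast hn1
      have hsum : |(∑ i ∈ Finset.range n, f ((0:ℝ) + i * α) (liftOrbit f α 0 0 i)) - n * (c + k)|
          ≤ n * (M/2) := by
        have heq : (∑ i ∈ Finset.range n, f ((0:ℝ) + i * α) (liftOrbit f α 0 0 i)) - n * (c + k)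
            = ∑ i ∈ Finset.range n, (f ((0:ℝ) + i * α) (liftOrbit f α 0 0 i) - (c + k)) := by
          rw [Finset.sum_sub_distrib, Finset.sum_const, Finset.card_range]
          push_cast
          ring
        rw [heq]
        calc |∑ i ∈ Finset.range n, (f ((0:ℝ) + i * α) (liftOrbit f α 0 0 i) - (c + k))|
            ≤ ∑ i ∈ Finset.range n, |f ((0:ℝ) + i * α) (liftOrbit f α 0 0 i) - (c + k)| :=
              Finset.abs_sum_le_sum_abs _ _
          _ ≤ ∑ _i ∈ Finset.range n, (M/2) := Finset.sum_le_sum fun i _ => hbd _ _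
          _ = n * (M/2) := by rw [Finset.sum_const, Finset.card_range]; push_cast; ring
      rw [show (∑ i ∈ Finset.range n, f ((0:ℝ) + i * α) (liftOrbit f α 0 0 i)) / n - (c + k)
          = ((∑ i ∈ Finset.range n, f ((0:ℝ) + i * α) (liftOrbit f α 0 0 i)) - n * (c + k)) / n
          by rw [sub_div, mul_div_cancel_left₀ _ hnpos.ne']]
      rw [abs_div, abs_of_pos hnpos]
      rw [div_le_iff₀ hnpos]
      linarith
    have hfin : |ρ - (c + k)| ≤ M/2 := by
      have tend : Tendsto (fun n : ℕ =>
          |(∑ i ∈ Finset.range n, f ((0:ℝ) + i * α) (liftOrbit f α 0 0 i)) / n - (c + k)|)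
          atTop (nhds |ρ - (c + k)|) := (hlim00.sub_const _).abs
      exact le_of_tendsto tend (Filter.eventually_atTop.2 ⟨1, hn⟩)
    calc distToInt (ρ - c) ≤ |ρ - c - k| := distToInt_le_abs_sub_int _ k
      _ = |ρ - (c + k)| := by ring_nf
      _ ≤ M/2 := hfin
      _ ≤ M := by linarith
end
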